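/- Let X be a real Hilbert space, let m ≥ 2, for each i ∈ {1,…,m} let T_i : X → X be firmly nonexpansive and asymptotically regular, i.e., 0 ∈ closure (Set.range (fun x => x − T_i x)), and let λ_1,…,λ_m ∈ (0,1] with ∑_{i=1}^m λ_i = 1. Then the convex combination T̄ = ∑_{i=1}^m λ_i T_i is asymptotically regular, i.e., 0 ∈ closure (Set.range (fun x => x − T̄ x)). -/

import Mathlib

/-!
A Brezis–Haraux type argument. For firmly nonexpansive `Aᵢ` and `Ā = ∑ wᵢ Aᵢ`, let
`b = ∑ wᵢ Aᵢ zᵢ`. For `μ > 0` the regularised equation `Ā x + μ x = b` has a solution (Banach's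
fixed point theorem, since `Ā` is again firmly nonexpansive), and pairing it with `x` using
`⟪A z - A x, x⟫ ≤ ‖z‖² / 4` gives `μ ‖x‖² ≤ ∑ wᵢ ‖zᵢ‖² / 4`. Hence `‖Ā x - b‖ = μ ‖x‖ = O(√μ)`,
so `∑ wᵢ closure (range Aᵢ) ⊆ closure (range Ā)`. Apply this to `Aᵢ = Id - Tᵢ` at `0`.
-/

open Set

section

variable {X : Type*} [NormedAddCommGroup X] [InnerProductSpace ℝ X]

def FirmlyNonexpansive (T : X → X) : Prop :=
  ∀ x y, ‖T x - T y‖ ^ 2 ≤ (inner ℝ (x - y) (T x - T y) : ℝ)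

namespace FirmlyNonexpansive

variable {T : X → X}

theorem norm_sub_le (hT : FirmlyNonexpansive T) (x y : X) : ‖T x - T y‖ ≤ ‖x - y‖ := by
  have := (hT x y).trans (real_inner_le_norm _ _)
  nlinarith [norm_nonneg (T x - T y), norm_nonneg (x - y)]

theorem id_sub (hT : FirmlyNonexpansive T) : FirmlyNonexpansive fun x => x - T x := by
  intro x y
  have hfne := hT x y
  calc ‖x - T x - (y - T y)‖ ^ 2
      = ‖x - y‖ ^ 2 - 2 * inner ℝ (x - y) (T x - T y) + ‖T x - T y‖ ^ 2 := by
        rw [← norm_sub_sq_real]; congr 2; abel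
    _ ≤ ‖x - y‖ ^ 2 - inner ℝ (x - y) (T x - T y) := by linarith
    _ = inner ℝ (x - y) (x - T x - (y - T y)) := by
        rw [show x - T x - (y - T y) = x - y - (T x - T y) by abel,
          inner_sub_right (x - y) (x - y), real_inner_self_eq_norm_sq]

theorem sum_smul {ι : Type*} [Fintype ι] {T : ι → X → X} {w : ι → ℝ}
    (hT : ∀ i, FirmlyNonexpansive (T i)) (hw₀ : ∀ i, 0 ≤ w i) (hw₁ : ∑ i, w i = 1) :
    FirmlyNonexpansive fun x => ∑ i, w i • T i x := by
  intro x y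
  have hsub : ∑ i, w i • T i x - ∑ i, w i • T i y = ∑ i, w i • (T i x - T i y) := by
    simp only [smul_sub, Finset.sum_sub_distrib]
  have hjensen := ((convexOn_norm convex_univ).pow (fun x _ => norm_nonneg x) 2).map_sum_le
    (t := Finset.univ) (p := fun i => T i x - T i y) (fun i _ => hw₀ i) hw₁ (fun _ _ => trivial)
  rw [hsub, inner_sum]
  refine hjensen.trans (Finset.sum_le_sum fun i _ => ?_)
  rw [real_inner_smul_right]
  exact mul_le_mul_of_nonneg_left (hT i x y) (hw₀ i)

theorem inner_sub_le (hT : FirmlyNonexpansive T) (x z : X) :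
    (inner ℝ (T z - T x) x : ℝ) ≤ ‖z‖ ^ 2 / 4 := by
  set u := T z - T x
  have hfne : ‖u‖ ^ 2 ≤ inner ℝ u (z - x) := real_inner_comm u (z - x) ▸ hT z x
  have hcs := real_inner_le_norm u z
  have hsplit : (inner ℝ u x : ℝ) = inner ℝ u z - inner ℝ u (z - x) := by
    rw [inner_sub_right]; ring
  nlinarith [sq_nonneg (‖u‖ - ‖z‖ / 2)]

theorem exists_add_smul_eq [CompleteSpace X] (hT : FirmlyNonexpansive T) {μ : ℝ} (hμ : 0 < μ)
    (b : X) : ∃ x, T x + μ • x = b := by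
  set K : NNReal := ⟨(1 + μ)⁻¹, by positivity⟩
  have hf : ContractingWith K fun x => (1 + μ)⁻¹ • (b + (x - T x)) := by
    refine ⟨show (1 + μ)⁻¹ < 1 from inv_lt_one_of_one_lt₀ (by linarith),
      LipschitzWith.of_dist_le_mul fun x y => ?_⟩
    rw [dist_eq_norm, dist_eq_norm, ← smul_sub, norm_smul, add_sub_add_left_eq_sub,
      Real.norm_of_nonneg (by positivity)]
    exact mul_le_mul_of_nonneg_left (hT.id_sub.norm_sub_le x y) (by positivity)
  have hx := (ContractingWith.fixedPoint_isFixedPt hf).eq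
  set x := ContractingWith.fixedPoint _ hf
  rw [inv_smul_eq_iff₀ (by positivity)] at hx
  exact ⟨x, by linear_combination (norm := module) -hx⟩

variable [CompleteSpace X] {ι : Type*} [Fintype ι] {A : ι → X → X} {w : ι → ℝ}

theorem sum_smul_mem_closure_range (hA : ∀ i, FirmlyNonexpansive (A i)) (hw₀ : ∀ i, 0 ≤ w i)
    (hw₁ : ∑ i, w i = 1) (z : ι → X) :
    ∑ i, w i • A i (z i) ∈ closure (range fun x => ∑ i, w i • A i x) := by
  rw [Metric.mem_closure_iff]
  intro ε hε
  set b := ∑ i, w i • A i (z i)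
  set C := ∑ i, w i * (‖z i‖ ^ 2 / 4)
  have hC : 0 ≤ C := Finset.sum_nonneg fun i _ => mul_nonneg (hw₀ i) (by positivity)
  set μ := ε ^ 2 / (C + 1)
  have hμ : 0 < μ := by positivity
  obtain ⟨x, hx⟩ := (sum_smul hA hw₀ hw₁).exists_add_smul_eq hμ b
  have hμx : μ * ‖x‖ ^ 2 ≤ C := calc
    μ * ‖x‖ ^ 2 = inner ℝ (b - ∑ i, w i • A i x) x := by
      rw [← hx, add_sub_cancel_left, real_inner_smul_left, real_inner_self_eq_norm_sq]
    _ = ∑ i, w i * inner ℝ (A i (z i) - A i x) x := by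
      simp only [b, ← Finset.sum_sub_distrib, ← smul_sub, sum_inner, real_inner_smul_left]
    _ ≤ C := Finset.sum_le_sum fun i _ =>
      mul_le_mul_of_nonneg_left ((hA i).inner_sub_le x (z i)) (hw₀ i)
  refine ⟨_, ⟨x, rfl⟩, ?_⟩
  have hdist : dist b (∑ i, w i • A i x) = μ * ‖x‖ := by
    rw [dist_eq_norm, ← hx, add_sub_cancel_left, norm_smul, Real.norm_of_nonneg hμ.le]
  rw [hdist]
  refine lt_of_pow_lt_pow_left₀ 2 hε.le ?_
  calc (μ * ‖x‖) ^ 2 = μ * (μ * ‖x‖ ^ 2) := by ring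
    _ ≤ μ * C := mul_le_mul_of_nonneg_left hμx hμ.le
    _ < ε ^ 2 := by
      rw [div_mul_eq_mul_div, div_lt_iff₀ (by positivity)]
      nlinarith [pow_pos hε 2]

theorem sum_smul_mem_closure_range_of_mem_closure (hA : ∀ i, FirmlyNonexpansive (A i))
    (hw₀ : ∀ i, 0 ≤ w i) (hw₁ : ∑ i, w i = 1) {v : ι → X}
    (hv : ∀ i, v i ∈ closure (range (A i))) :
    ∑ i, w i • v i ∈ closure (range fun x => ∑ i, w i • A i x) := by
  have hv' : v ∈ closure (univ.pi fun i => range (A i)) := by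
    rw [closure_pi_set]
    exact fun i _ => hv i
  have hmaps : MapsTo (fun u : ι → X => ∑ i, w i • u i) (univ.pi fun i => range (A i))
      (closure (range fun x => ∑ i, w i • A i x)) := fun u hu => by
    choose z hz using fun i => hu i (mem_univ i)
    simpa only [hz] using sum_smul_mem_closure_range hA hw₀ hw₁ z
  simpa only [closure_closure] using map_mem_closure (by fun_prop) hv' hmaps

end FirmlyNonexpansive

end

theorem stmt_12_general {X : Type*} [NormedAddCommGroup X] [InnerProductSpace ℝ X] [CompleteSpace X]
    (m : ℕ) (T : Fin m → X → X)
    (hT : ∀ i, ∀ x y : X, ‖T i x - T i y‖ ^ 2 ≤ (inner ℝ (x - y) (T i x - T i y) : ℝ))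
    (hreg : ∀ i, (0 : X) ∈ closure (Set.range (fun x => x - T i x)))
    (lam : Fin m → ℝ) (hlam : ∀ i, lam i ∈ Set.Ioc (0 : ℝ) 1) (hsum : ∑ i, lam i = 1) :
    (0 : X) ∈ closure (Set.range (fun x => x - ∑ i, lam i • T i x)) := by
  have hcomb : (fun x => x - ∑ i, lam i • T i x) = fun x => ∑ i, lam i • (x - T i x) := by
    funext x
    simp only [smul_sub, Finset.sum_sub_distrib, ← Finset.sum_smul, hsum, one_smul]
  rw [hcomb]
  have hA : ∀ i, FirmlyNonexpansive fun x => x - T i x := fun i =>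
    FirmlyNonexpansive.id_sub (hT i)
  simpa only [smul_zero, Finset.sum_const_zero] using
    FirmlyNonexpansive.sum_smul_mem_closure_range_of_mem_closure hA (fun i => (hlam i).1.le)
      hsum hreg

theorem stmt_12 {X : Type*} [NormedAddCommGroup X] [InnerProductSpace ℝ X] [CompleteSpace X]
    (m : ℕ) (hm : 2 ≤ m) (T : Fin m → X → X)
    (hT : ∀ i, ∀ x y : X, ‖T i x - T i y‖ ^ 2 ≤ (inner ℝ (x - y) (T i x - T i y) : ℝ))
    (hreg : ∀ i, (0 : X) ∈ closure (Set.range (fun x => x - T i x)))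
    (lam : Fin m → ℝ) (hlam : ∀ i, lam i ∈ Set.Ioc (0 : ℝ) 1) (hsum : ∑ i, lam i = 1) :
    (0 : X) ∈ closure (Set.range (fun x => x - ∑ i, lam i • T i x)) :=
  stmt_12_general m T hT hreg lam hlam hsum
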